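/- arXiv:0807.2044 — 2 statements merged into one kernel-verified Lean document; each statement's English description precedes it below -/
import Mathlib

section
/- Let π be a group with π/[π,π] ≅ ℤ/2k (k ≥ 1), κ: π → ℤ/2 the unique epimorphism, K = ker κ, and A = K/[K,K] the Alexander module with the ℤ/2-action induced by conjugation. Let à be the kernel of the canonical map A → ℤ/k. If A is finitely generated as an abelian group and π admits no abelian quotient strictly larger than ℤ/2k of the appropriate type, then: à is a finite group of odd order, the generator t of ℤ/2 acts on à as multiplication by -1, and the exact sequence 0 → à → A → ℤ/k → 0 splits as ℤ[ℤ/2]-modules with A = à ⊕ ker(1-t). -/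
/-!
Every `g ∈ G` acts on `A = (ker κ)ᵃᵇ` by conjugation either trivially or as the involution `t`
induced by `τ`. If a `G`-stable subgroup `S ≤ A` contains `g • a / a` for every `a` in
`Ã = ker (A → Gᵃᵇ)`, then the quotient of `G` by the preimage of `S` has central commutator
subgroup and cyclic abelianization, so it is abelian and `Ã ≤ S`. With `S = (t - 1) A` this shows
that `t = -1` on `Ã`, and then with `S = 2 Ã` that `Ã = 2 Ã`. As `Ã` is finitely generated,
Nakayama's lemma gives an odd `r` with `r Ã = 0`: so `Ã` is finite of odd order, `t` has no
nonzero fixed points on it, and `a = b + (a - b)` with `2 b = a - t a` splits `A`.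
-/

open Abelianization commutatorElement

section CommGroup

variable {A : Type*} [CommGroup A]

instance CommGroup.fg_subgroup [Group.FG A] (S : Subgroup A) : Group.FG S := by
  have : Module.Finite ℤ (Additive A) := Module.Finite.iff_addGroup_fg.2 inferInstance
  rw [Group.fg_iff_subgroup_fg, Subgroup.fg_iff_add_fg]
  exact Submodule.fg_toAddSubgroup (IsNoetherian.noetherian S.toAddSubgroup.toIntSubmodule)

theorem exists_odd_pow_eq_one_of_forall_isSquare [Group.FG A] (h : ∀ a : A, IsSquare a) :
    ∃ r : ℕ, Odd r ∧ ∀ a : A, a ^ r = 1 := by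
  have : Module.Finite ℤ (Additive A) := Module.Finite.iff_addGroup_fg.2 inferInstance
  have hdiv : (⊤ : Submodule ℤ (Additive A)) ≤ Ideal.span {(2 : ℤ)} • ⊤ := by
    rintro x -
    obtain ⟨y, hy⟩ := h x.toMul
    have hx : x = (2 : ℤ) • Additive.ofMul y := by
      rw [two_zsmul, ← ofMul_mul, ← hy, ofMul_toMul]
    exact hx ▸ Submodule.smul_mem_smul (Ideal.mem_span_singleton_self 2) trivial
  obtain ⟨r, hr, hr0⟩ := Submodule.exists_sub_one_mem_and_smul_eq_zero_of_fg_of_le_smul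
    _ _ Module.Finite.fg_top hdiv
  refine ⟨r.natAbs, Int.natAbs_odd.2 ?_, fun a => ?_⟩
  · obtain ⟨m, hm⟩ := Ideal.mem_span_singleton'.1 hr
    exact ⟨m, by omega⟩
  · have har : a ^ r = 1 := hr0 (Additive.ofMul a) trivial
    exact pow_natAbs_eq_one.2 har

theorem odd_card_of_pow_eq_one {H : Type*} [Group H] [Finite H] {r : ℕ} (hr : Odd r)
    (h : ∀ x : H, x ^ r = 1) : Odd (Nat.card H) := by
  rw [← Nat.not_even_iff_odd, even_iff_two_dvd]
  intro h2
  obtain ⟨x, hx⟩ := exists_prime_orderOf_dvd_card' 2 h2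
  have := hx ▸ orderOf_dvd_of_pow_eq_one (h x)
  exact Nat.not_even_iff_odd.2 hr (even_iff_two_dvd.2 this)

theorem eq_one_of_inv_eq_self_of_pow_odd {H : Type*} [Group H] {r : ℕ} (hr : Odd r) {x : H}
    (hx : x ^ r = 1) (hinv : x⁻¹ = x) : x = 1 := by
  have hsq : x ^ 2 = 1 := by rw [sq]; nth_rw 1 [← hinv]; exact inv_mul_cancel x
  simpa [(Nat.coprime_two_left.2 hr).gcd_eq_one] using pow_gcd_eq_one.2 ⟨hsq, hx⟩

theorem exists_mem_mul_fixed_of_pow_odd {t : A →* A} {S : Subgroup A} {r : ℕ} (hr : Odd r)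
    (hS : ∀ a ∈ S, a ^ r = 1) (hinv : ∀ a ∈ S, t a = a⁻¹) (hdiv : ∀ a, a / t a ∈ S) (a : A) :
    ∃ b ∈ S, ∃ c, t c = c ∧ a = b * c := by
  obtain ⟨m, rfl⟩ := hr
  set d := a / t a
  have hb : d ^ (m + 1) ∈ S := pow_mem (hdiv a) _
  have hb2 : (d ^ (m + 1)) ^ 2 = d := by
    rw [← pow_mul, show (m + 1) * 2 = 2 * m + 1 + 1 by ring, pow_succ, hS d (hdiv a), one_mul]
  refine ⟨d ^ (m + 1), hb, (d ^ (m + 1))⁻¹ * a, ?_, by rw [mul_inv_cancel_left]⟩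
  calc t ((d ^ (m + 1))⁻¹ * a) = d ^ (m + 1) * t a := by rw [map_mul, map_inv, hinv _ hb, inv_inv]
    _ = (d ^ (m + 1))⁻¹ * ((d ^ (m + 1)) ^ 2 * t a) := by group
    _ = (d ^ (m + 1))⁻¹ * a := by rw [hb2, div_mul_cancel]

end CommGroup

section Cyclic

variable {G : Type*} [Group G]

theorem commutative_of_commutator_le_center [IsCyclic (Abelianization G)]
    (h : commutator G ≤ Subgroup.center G) (a b : G) : a * b = b * a := by
  have := (of : G →* Abelianization G).isMulCommutative_of_isCyclic_of_ker_le_center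
    (by rwa [ker_of])
  exact this.is_comm.comm a b

theorem commutator_le_of_commutatorElement_mem [IsCyclic (Abelianization G)] (P : Subgroup G)
    [P.Normal] (h : ∀ g x : G, x ∈ commutator G → ⁅g, x⁆ ∈ P) : commutator G ≤ P := by
  have : IsCyclic (Abelianization (G ⧸ P)) := by
    refine isCyclic_of_surjective (map (QuotientGroup.mk' P)) fun y => ?_
    induction y using QuotientGroup.induction_on with | H q => ?_
    obtain ⟨g, rfl⟩ := QuotientGroup.mk'_surjective P q
    exact ⟨of g, rfl⟩
  have hcomm : commutator (G ⧸ P) ≤ Subgroup.center (G ⧸ P) := by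
    rw [commutator_def, ← Subgroup.map_top_of_surjective _ (QuotientGroup.mk'_surjective P),
      ← Subgroup.map_commutator]
    rintro _ ⟨x, hx, rfl⟩
    refine Subgroup.mem_center_iff.2 fun q => ?_
    obtain ⟨g, rfl⟩ := QuotientGroup.mk'_surjective P q
    rw [← commutatorElement_eq_one_iff_mul_comm, ← map_commutatorElement,
      QuotientGroup.mk'_apply, QuotientGroup.eq_one_iff]
    exact h g x hx
  rw [commutator_eq_closure, Subgroup.closure_le]
  rintro _ ⟨g, h, rfl⟩
  rw [SetLike.mem_coe, ← QuotientGroup.eq_one_iff, ← QuotientGroup.mk'_apply,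
    map_commutatorElement, commutatorElement_eq_one_iff_mul_comm]
  exact commutative_of_commutator_le_center hcomm _ _

end Cyclic

section ConjAbelianization

variable {G : Type*} [Group G] (N : Subgroup G) [N.Normal]

def conjAbelianization (g : G) : Abelianization N →* Abelianization N :=
  map (MulAut.conjNormal g).toMonoidHom

@[simp]
theorem conjAbelianization_of (g : G) (x : N) :
    conjAbelianization N g (of x) = of (MulAut.conjNormal g x) :=
  rfl

theorem conjAbelianization_mul (g h : G) :
    conjAbelianization N (g * h) = (conjAbelianization N g).comp (conjAbelianization N h) := by
  ext x
  simp [MulAut.mul_apply]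

theorem conjAbelianization_of_mem {g : G} (hg : g ∈ N) :
    conjAbelianization N g = MonoidHom.id _ := by
  ext x
  have hx : MulAut.conjNormal g x = ⟨g, hg⟩ * x * (⟨g, hg⟩ : N)⁻¹ := by
    ext; simp [MulAut.conjNormal_apply]
  simp [hx, mul_inv_cancel_comm]

theorem map_subtype_comp_conjAbelianization (g : G) :
    (map N.subtype).comp (conjAbelianization N g) = map N.subtype := by
  ext x
  simp [MulAut.conjNormal_apply, mul_inv_cancel_comm]

variable [IsCyclic (Abelianization G)]

theorem ker_map_subtype_le (hN : commutator G ≤ N) (S : Subgroup (Abelianization N))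
    (hS : ∀ g, ∀ a ∈ S, conjAbelianization N g a ∈ S)
    (h : ∀ g, ∀ a ∈ (map N.subtype).ker, conjAbelianization N g a / a ∈ S) :
    (map N.subtype).ker ≤ S := by
  set P : Subgroup G := (S.comap of).map N.subtype
  have mem_P (x : N) : (x : G) ∈ P ↔ of x ∈ S := Subgroup.mem_map_iff_mem N.subtype_injective
  have of_eq_one {x : N} : of x ∈ (map N.subtype).ker ↔ (x : G) ∈ commutator G := by
    rw [MonoidHom.mem_ker, map_of, ← ker_of, MonoidHom.mem_ker, N.coe_subtype]
  have : P.Normal := ⟨by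
    rintro _ ⟨x, hx, rfl⟩ g
    change g * (x : G) * g⁻¹ ∈ P
    rw [← MulAut.conjNormal_apply, mem_P, ← conjAbelianization_of]
    exact hS g _ hx⟩
  have hP : commutator G ≤ P := commutator_le_of_commutatorElement_mem P fun g x hx => by
    lift x to N using hN hx
    rw [commutatorElement_def, ← MulAut.conjNormal_apply, ← N.coe_inv, ← N.coe_mul, mem_P,
      map_mul, map_inv, ← conjAbelianization_of, ← div_eq_mul_inv]
    exact h g _ (of_eq_one.2 hx)
  intro a ha
  obtain ⟨x, rfl⟩ := QuotientGroup.mk_surjective a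
  exact (mem_P x).1 (hP (of_eq_one.1 ha))

end ConjAbelianization

section IndexTwo

variable {G : Type*} [Group G] {κ : G →* Multiplicative (ZMod 2)} {τ : G}

theorem conjAbelianization_eq_id_or_eq (hτ : κ τ = Multiplicative.ofAdd 1) (g : G) :
    conjAbelianization κ.ker g = MonoidHom.id _ ∨
      conjAbelianization κ.ker g = conjAbelianization κ.ker τ⁻¹ := by
  have two_values : ∀ c : Multiplicative (ZMod 2), c = 1 ∨ c = Multiplicative.ofAdd 1 := by
    decide
  rcases two_values (κ g) with hg | hg
  · exact .inl (conjAbelianization_of_mem _ hg)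
  · have hgτ : g * τ ∈ κ.ker := by rw [MonoidHom.mem_ker, map_mul, hg, hτ]; rfl
    right
    rw [← mul_inv_cancel_right g τ, conjAbelianization_mul, conjAbelianization_of_mem _ hgτ,
      MonoidHom.id_comp]

theorem conjAbelianization_inv_involutive (hτ : κ τ = Multiplicative.ofAdd 1)
    (a : Abelianization κ.ker) :
    conjAbelianization κ.ker τ⁻¹ (conjAbelianization κ.ker τ⁻¹ a) = a := by
  have hτ2 : τ⁻¹ * τ⁻¹ ∈ κ.ker := by rw [MonoidHom.mem_ker, map_mul, map_inv, hτ]; rfl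
  rw [← MonoidHom.comp_apply, ← conjAbelianization_mul, conjAbelianization_of_mem _ hτ2,
    MonoidHom.id_apply]

variable [IsCyclic (Abelianization G)]

theorem conjAbelianization_inv_eq_inv_of_mem_ker (hτ : κ τ = Multiplicative.ofAdd 1)
    {a : Abelianization κ.ker} (ha : a ∈ (map κ.ker.subtype).ker) :
    conjAbelianization κ.ker τ⁻¹ a = a⁻¹ := by
  set t := conjAbelianization κ.ker τ⁻¹
  have hS (g : G) : ∀ b ∈ (t / MonoidHom.id _).range,
      conjAbelianization κ.ker g b ∈ (t / MonoidHom.id _).range := by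
    rintro _ ⟨b, rfl⟩
    rcases conjAbelianization_eq_id_or_eq hτ g with hg | hg <;> rw [hg]
    · exact ⟨b, rfl⟩
    · exact ⟨t b, by simp [t, conjAbelianization_inv_involutive hτ]⟩
  have hδ (g : G) (b : Abelianization κ.ker) :
      conjAbelianization κ.ker g b / b ∈ (t / MonoidHom.id _).range := by
    rcases conjAbelianization_eq_id_or_eq hτ g with hg | hg <;> rw [hg]
    · simp
    · exact ⟨b, rfl⟩
  obtain ⟨b, rfl⟩ :=
    ker_map_subtype_le κ.ker (commutator_subset_ker κ) _ hS (fun g b _ => hδ g b) ha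
  simp [t, conjAbelianization_inv_involutive hτ]

theorem exists_sq_eq_of_mem_ker (hτ : κ τ = Multiplicative.ofAdd 1) {a : Abelianization κ.ker}
    (ha : a ∈ (map κ.ker.subtype).ker) :
    ∃ b ∈ (map κ.ker.subtype).ker, b ^ 2 = a := by
  set Ã := (map κ.ker.subtype).ker
  have hÃ (g : G) {b} (hb : b ∈ Ã) : conjAbelianization κ.ker g b ∈ Ã := by
    rwa [MonoidHom.mem_ker, ← MonoidHom.comp_apply, map_subtype_comp_conjAbelianization]
  refine ker_map_subtype_le κ.ker (commutator_subset_ker κ) (Ã.map (powMonoidHom 2))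
    (fun g _ ⟨b, hb, hba⟩ => ⟨_, hÃ g hb, by simp [← hba]⟩) (fun g b hb => ?_) ha
  rcases conjAbelianization_eq_id_or_eq hτ g with hg | hg <;> rw [hg]
  · exact ⟨1, one_mem Ã, by simp⟩
  · refine ⟨b⁻¹, inv_mem hb, ?_⟩
    rw [conjAbelianization_inv_eq_inv_of_mem_ker hτ hb, powMonoidHom_apply, inv_pow, sq,
      div_eq_mul_inv, mul_inv]

theorem exists_odd_pow_eq_one_of_mem_ker (hτ : κ τ = Multiplicative.ofAdd 1)
    [Group.FG (Abelianization κ.ker)] :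
    ∃ r, Odd r ∧ ∀ a ∈ (map κ.ker.subtype).ker, a ^ r = 1 := by
  set Ã := (map κ.ker.subtype).ker
  have hsq (a : Ã) : IsSquare a := by
    obtain ⟨b, hb, hba⟩ := exists_sq_eq_of_mem_ker hτ a.2
    exact ⟨⟨b, hb⟩, Subtype.ext (by simp [← hba, sq])⟩
  obtain ⟨r, hr, h⟩ := exists_odd_pow_eq_one_of_forall_isSquare hsq
  exact ⟨r, hr, fun a ha => congrArg Subtype.val (h ⟨a, ha⟩)⟩

end IndexTwo

theorem stmt_13_general (k : ℕ) (G : Type*) [Group G]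
    (ψ : Abelianization G ≃* Multiplicative (ZMod (2 * k)))
    (κ : G →* Multiplicative (ZMod 2))
    (hfg : Group.FG (Abelianization ↥κ.ker))
    (tbar : G) (htbar : κ tbar = Multiplicative.ofAdd 1)
    (T : ↥κ.ker ≃* ↥κ.ker)
    (hT : ∀ x : ↥κ.ker, (T x : G) = tbar⁻¹ * ↑x * tbar)
    (tAct : Abelianization ↥κ.ker →* Abelianization ↥κ.ker)
    (htAct : ∀ x : ↥κ.ker, tAct (Abelianization.of x) = Abelianization.of (T x))
    (ρ : Abelianization ↥κ.ker →* Multiplicative (ZMod (2 * k)))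
    (hρ : ∀ x : ↥κ.ker, ρ (Abelianization.of x) = ψ (Abelianization.of (x : G))) :
    Finite ↥ρ.ker ∧ Odd (Nat.card ↥ρ.ker) ∧
      (∀ a ∈ ρ.ker, tAct a = a⁻¹) ∧
      (∀ a : Abelianization ↥κ.ker, ∃ b ∈ ρ.ker, ∃ c, tAct c = c ∧ a = b * c) ∧
      (∀ a ∈ ρ.ker, tAct a = a → a = 1) := by
  have : IsCyclic (Abelianization G) := isCyclic_of_surjective _ ψ.symm.surjective
  obtain rfl : tAct = conjAbelianization κ.ker tbar⁻¹ := by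
    ext x
    simp only [MonoidHom.comp_apply, htAct, conjAbelianization_of]
    congr 1
    ext
    rw [hT, MulAut.conjNormal_apply, inv_inv]
  have hρ_ker : ρ.ker = (map κ.ker.subtype).ker := by
    rw [show ρ = ψ.toMonoidHom.comp (map κ.ker.subtype) by ext x; simp [hρ],
      MonoidHom.ker_comp_of_injective _ _ ψ.injective]
  rw [hρ_ker]
  set Ã := (map κ.ker.subtype).ker
  obtain ⟨r, hr, hpow⟩ := exists_odd_pow_eq_one_of_mem_ker htbar
  have hpow' (a : Ã) : a ^ r = 1 := Subtype.ext (hpow a a.2)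
  have hfin : Finite Ã := CommGroup.finite_of_fg_isMulTorsion _ fun a =>
    isOfFinOrder_iff_pow_eq_one.2 ⟨r, hr.pos, hpow' a⟩
  have hinv := fun a ha => conjAbelianization_inv_eq_inv_of_mem_ker htbar (a := a) ha
  refine ⟨hfin, odd_card_of_pow_eq_one hr hpow', hinv,
    exists_mem_mul_fixed_of_pow_odd hr hpow hinv fun a => ?_,
    fun a ha hfix => eq_one_of_inv_eq_self_of_pow_odd hr (hpow a ha) (by rw [← hinv a ha, hfix])⟩
  rw [MonoidHom.mem_ker, map_div, ← MonoidHom.comp_apply, map_subtype_comp_conjAbelianization,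
    div_self']

/-- Let `π` be a group with `π/[π,π] ≅ ℤ/2k`, `κ : π → ℤ/2` the
(unique) epimorphism, `K = ker κ`, and `A = K/[K,K]` the Alexander module, the
generator `t` of `ℤ/2` acting via conjugation by a lift `t̄`.  Let `Ã` be the
kernel of the canonical map `A → ℤ/k` (equivalently, of the map
`ρ : A → π/[π,π] = ℤ/2k` induced by the inclusion `K ⊆ π`).  If `A` is finitely
generated, then `Ã` is a finite group of odd order, `t` acts on `Ã` as
multiplication by `-1` (inversion), and `0 → Ã → A → ℤ/k → 0` splits:
`A = Ã ⊕ ker(1 - t)`. -/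
theorem stmt_13 (k : ℕ) (hk : 1 ≤ k) (G : Type*) [Group G]
    (ψ : Abelianization G ≃* Multiplicative (ZMod (2 * k)))
    (κ : G →* Multiplicative (ZMod 2)) (hκ : Function.Surjective κ)
    (hfg : Group.FG (Abelianization ↥κ.ker))
    (tbar : G) (htbar : κ tbar = Multiplicative.ofAdd 1)
    (T : ↥κ.ker ≃* ↥κ.ker)
    (hT : ∀ x : ↥κ.ker, (T x : G) = tbar⁻¹ * ↑x * tbar)
    (tAct : Abelianization ↥κ.ker →* Abelianization ↥κ.ker)
    (htAct : ∀ x : ↥κ.ker, tAct (Abelianization.of x) = Abelianization.of (T x))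
    (ρ : Abelianization ↥κ.ker →* Multiplicative (ZMod (2 * k)))
    (hρ : ∀ x : ↥κ.ker, ρ (Abelianization.of x) = ψ (Abelianization.of (x : G))) :
    Finite ↥ρ.ker ∧ Odd (Nat.card ↥ρ.ker) ∧
      (∀ a ∈ ρ.ker, tAct a = a⁻¹) ∧
      (∀ a : Abelianization ↥κ.ker, ∃ b ∈ ρ.ker, ∃ c, tAct c = c ∧ a = b * c) ∧
      (∀ a ∈ ρ.ker, tAct a = a → a = 1) :=
  stmt_13_general k G ψ κ hfg tbar htbar T hT tAct htAct ρ hρ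
end

section
/- Let A be a ℤ[ℤ/2]-module which is a quotient of ℤ[ℤ/2]/(t-1) ⊕ (ℤ[ℤ/2])^{d-2}, and let à ⊆ A be a submodule on which the generator t acts by -1. Then for every odd prime p, ℓ_p(Ã) ≤ d - 2, i.e., the p-primary part of à requires at most d-2 generators. -/
/-- The group ring `ℤ[ℤ/2]`. -/
abbrev GrpRing : Type := MonoidAlgebra ℤ (Multiplicative (ZMod 2))

/-- The generator `t` of `ℤ/2` inside `ℤ[ℤ/2]`. -/
noncomputable def tGen : GrpRing :=
  MonoidAlgebra.of ℤ (Multiplicative (ZMod 2)) (Multiplicative.ofAdd 1)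

/-- The `ℤ[ℤ/2]`-module `ℤ[ℤ/2]/(t-1) ⊕ (ℤ[ℤ/2])^{d-2}`. -/
abbrev AlexTarget (d : ℕ) : Type :=
  (GrpRing ⧸ Ideal.span {tGen - 1}) × (Fin (d - 2) → GrpRing)

/-- The minimal number of generators of an (additive) abelian group. -/
noncomputable def minGen (A : Type*) [AddCommGroup A] : ℕ :=
  sInf {m | ∃ f : Fin m → A, AddSubgroup.closure (Set.range f) = ⊤}

/-- `ℓ_p`: the minimal number of generators of the `p`-primary part. -/
noncomputable def ellp (p : ℕ) [Fact p.Prime] (A : Type*) [AddCommGroup A] : ℕ :=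
  minGen (AddCommGroup.primaryComponent A p)

/-! On the `(-1)`-eigenspace, `1 - t` acts as multiplication by `2`, which is invertible on
elements of odd order; so the `p`-primary part of `Ã` lies in `(1 - t)A`. As `1 - t` kills
`ℤ[ℤ/2]/(t-1)` and `(1 - t)ℤ[ℤ/2] = ℤ(1 - t)`, the group `(1 - t)A` is generated by the `d - 2`
images of `(0, (1 - t)eᵢ)`, and over the PID `ℤ` a subgroup of a `k`-generated group is
`k`-generated. -/

theorem minGen_le_of_surjective {B : Type*} [AddCommGroup B] {n : ℕ} (φ : (Fin n → ℤ) →+ B)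
    (hφ : Function.Surjective φ) : minGen B ≤ n := by
  refine Nat.sInf_le ⟨fun i => φ (Pi.basisFun ℤ (Fin n) i), ?_⟩
  have hspan : Submodule.span ℤ (Set.range fun i => φ (Pi.basisFun ℤ (Fin n) i)) = ⊤ := by
    rw [Set.range_comp' φ, ← φ.coe_toIntLinearMap, ← Submodule.map_span,
      (Pi.basisFun ℤ (Fin n)).span_eq, Submodule.map_top, LinearMap.range_eq_top]
    exact hφ
  rw [← Submodule.span_int_eq_addSubgroupClosure, hspan, Submodule.top_toAddSubgroup]

theorem minGen_le_of_injective_of_mem_span {B M : Type*} [AddCommGroup B] [AddCommGroup M]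
    {k : ℕ} (g : B →ₗ[ℤ] M) (hg : Function.Injective g) (c : Fin k → M)
    (hc : ∀ b, g b ∈ Submodule.span ℤ (Set.range c)) : minGen B ≤ k := by
  let φ := Fintype.linearCombination ℤ c
  let Q := (LinearMap.range g).comap φ
  let b := Module.finBasis ℤ Q
  have hQ : Module.finrank ℤ Q ≤ k := by simpa using Q.finrank_le
  let ψ := (LinearEquiv.ofInjective g hg).symm.toLinearMap ∘ₗ φ.restrict (fun q hq => hq) ∘ₗ
    b.equivFun.symm.toLinearMap
  refine le_trans (minGen_le_of_surjective ψ.toAddMonoidHom fun w => ?_) hQ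
  obtain ⟨q, hq⟩ : g w ∈ LinearMap.range φ := by
    rw [Fintype.range_linearCombination]; exact hc w
  refine ⟨b.equivFun ⟨q, ⟨w, hq.symm⟩⟩, hg ?_⟩
  simp [ψ, hq]

theorem tGen_mul_tGen : tGen * tGen = 1 := by
  rw [tGen, MonoidAlgebra.of_apply, MonoidAlgebra.single_mul_single, mul_one]
  exact congrArg (MonoidAlgebra.single · 1) (by decide)

section
variable {M : Type*} [AddCommGroup M] [Module GrpRing M]

theorem smul_mem_span_singleton_of_tGen_smul_eq_neg {a : M} (ha : tGen • a = -a) (s : GrpRing) :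
    s • a ∈ Submodule.span ℤ {a} := by
  induction s using MonoidAlgebra.induction_on with
  | of g =>
    obtain rfl | rfl : g = 1 ∨ g = Multiplicative.ofAdd 1 := by revert g; decide
    · rw [map_one, one_smul]
      exact Submodule.mem_span_singleton_self a
    · change tGen • a ∈ _
      rw [ha]
      exact neg_mem (Submodule.mem_span_singleton_self a)
  | add s₁ s₂ h₁ h₂ => rw [add_smul]; exact add_mem h₁ h₂
  | smul z s h => rw [smul_assoc]; exact Submodule.smul_mem _ z h

theorem mem_span_one_sub_tGen_smul {x : M} (hx : tGen • x = -x) {m : ℕ} (hm : Odd m)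
    (hmx : m • x = 0) : x ∈ Submodule.span ℤ {(1 - tGen) • x} := by
  obtain ⟨j, rfl⟩ := hm
  have htwo : (1 - tGen) • x = (2 : ℤ) • x := by
    rw [sub_smul, one_smul, hx, sub_neg_eq_add, two_zsmul]
  refine Submodule.mem_span_singleton.2 ⟨j + 1, ?_⟩
  rw [htwo, smul_smul, show ((j : ℤ) + 1) * 2 = (2 * j + 1 : ℕ) + 1 by push_cast; ring,
    add_smul, natCast_zsmul, hmx, zero_add, one_smul]

end

theorem one_sub_tGen_smul_quotient_eq_zero (q : GrpRing ⧸ Ideal.span {tGen - 1}) :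
    (1 - tGen) • q = 0 := by
  obtain ⟨a, rfl⟩ := Ideal.Quotient.mk_surjective q
  rw [← Ideal.Quotient.mk_eq_mk, ← Submodule.Quotient.mk_smul, smul_eq_mul,
    Ideal.Quotient.mk_eq_mk, Ideal.Quotient.eq_zero_iff_mem, Ideal.mem_span_singleton]
  exact ⟨-a, by ring⟩

noncomputable def alexGen (d : ℕ) (i : Fin (d - 2)) : AlexTarget d := (0, Pi.single i (1 - tGen))

theorem tGen_smul_alexGen (d : ℕ) (i : Fin (d - 2)) : tGen • alexGen d i = -alexGen d i := by
  have h : tGen * (1 - tGen) = -(1 - tGen) := by rw [mul_sub, mul_one, tGen_mul_tGen, neg_sub]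
  simp [alexGen, ← Pi.single_smul', h, ← Pi.single_neg]

theorem one_sub_tGen_smul_eq_sum (d : ℕ) (ξ : AlexTarget d) :
    (1 - tGen) • ξ = ∑ i, ξ.2 i • alexGen d i := by
  refine Prod.ext ?_ (funext fun i => ?_)
  · simp only [Prod.smul_fst, Prod.fst_sum, alexGen, Prod.smul_mk, smul_zero,
      Finset.sum_const_zero]
    exact one_sub_tGen_smul_quotient_eq_zero ξ.1
  · simp [alexGen, Prod.snd_sum, Finset.sum_apply, Pi.single_apply, mul_comm]

theorem one_sub_tGen_smul_mem_span {d : ℕ} {A : Type*} [AddCommGroup A] [Module GrpRing A]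
    (f : AlexTarget d →ₗ[GrpRing] A) (ξ : AlexTarget d) :
    (1 - tGen) • f ξ ∈ Submodule.span ℤ (Set.range (f ∘ alexGen d)) := by
  rw [← map_smul, one_sub_tGen_smul_eq_sum, map_sum]
  refine Submodule.sum_mem _ fun i _ => ?_
  rw [map_smul]
  refine Submodule.span_mono (Set.singleton_subset_iff.2 (Set.mem_range_self i))
    (smul_mem_span_singleton_of_tGen_smul_eq_neg ?_ _)
  rw [Function.comp_apply, ← map_smul, tGen_smul_alexGen, map_neg]

theorem stmt_16_general (p : ℕ) [Fact p.Prime] (hp2 : p ≠ 2) (d : ℕ)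
    (A : Type*) [AddCommGroup A] [Module GrpRing A]
    (f : AlexTarget d →ₗ[GrpRing] A) (hf : Function.Surjective f)
    (Atil : Submodule GrpRing A) (hneg : ∀ x ∈ Atil, tGen • x = -x) :
    ellp p ↥Atil ≤ d - 2 := by
  let P := AddCommGroup.primaryComponent Atil p
  refine minGen_le_of_injective_of_mem_span
    (Atil.subtype.restrictScalars ℤ ∘ₗ P.subtype.toIntLinearMap)
    (Subtype.val_injective.comp Subtype.val_injective) (f ∘ alexGen d) fun z => ?_
  obtain ⟨n, hn⟩ := AddCommGroup.mem_primaryComponent.1 z.2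
  change ((z : Atil) : A) ∈ _
  obtain ⟨ξ, hξ⟩ := hf z
  have hodd : Odd (p ^ n) := (Nat.Prime.odd_of_ne_two Fact.out hp2).pow
  have htors : p ^ n • ((z : Atil) : A) = 0 := by simpa using congrArg Subtype.val hn
  refine Submodule.span_le.2 ?_ (mem_span_one_sub_tGen_smul (hneg _ (z : Atil).2) hodd htors)
  exact Set.singleton_subset_iff.2 (hξ ▸ one_sub_tGen_smul_mem_span f ξ)

/-- Let `A` be a `ℤ[ℤ/2]`-module which is a quotient of
`ℤ[ℤ/2]/(t-1) ⊕ (ℤ[ℤ/2])^{d-2}`, and let `Ã ⊆ A` be a submodule on which the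
generator `t` acts by `-1`.  Then for every odd prime `p`, `ℓ_p(Ã) ≤ d - 2`. -/
theorem stmt_16 (p : ℕ) [Fact p.Prime] (hp2 : p ≠ 2) (d : ℕ) (hd : 2 ≤ d)
    (A : Type*) [AddCommGroup A] [Module GrpRing A]
    (f : AlexTarget d →ₗ[GrpRing] A) (hf : Function.Surjective f)
    (Atil : Submodule GrpRing A) (hneg : ∀ x ∈ Atil, tGen • x = -x) :
    ellp p ↥Atil ≤ d - 2 :=
  stmt_16_general p hp2 d A f hf Atil hneg
end
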